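/- Suppose σ > 0, B_j ⪰ σI for every j, let d = d(x) be the minimizer of Q(x,·) with θ(x) = Q(x,d), let τ ∈ (0,1), and let C_1,…,C_m ∈ ℝ satisfy C_j ≥ F_j(x) for every j. If x is not a critical point of F (equivalently d ≠ 0, so θ(x) < 0), then there exists ᾱ > 0 such that for all α ∈ (0, ᾱ] and all j ∈ {1,…,m}, F_j(x + α d) ≤ C_j + τ α θ(x). -/

import Mathlib

/-!
Strong convexity of each `Q_j(x, ·)` (from `B_j ⪰ σI`) gives
`Q(x, d/2) ≤ Q(x, d)/2 - σ‖d‖²/8`, so at a nonzero minimiser `d` the optimal value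
`θ(x) = Q(x, d)` is negative. Along `d`, convexity of `g_j` bounds `g_j(x + αd)` by its chord and
differentiability of `f_j` bounds `f_j(x + αd)` to first order; as
`⟨∇f_j(x), d⟩ + g_j(x + d) - g_j(x) ≤ Q_j(x, d) ≤ θ(x) < τθ(x)`, for small `α > 0` this gives
`F_j(x + αd) ≤ F_j(x) + τα θ(x) ≤ C_j + τα θ(x)`.
-/

open Filter Topology
open scoped RealInnerProductSpace BigOperators

noncomputable section

namespace NPQN

variable {n m : ℕ}

/-- The quadratic form `⟨d, B d⟩` of a matrix `B` acting on Euclidean space. -/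
def mquad (B : Matrix (Fin n) (Fin n) ℝ) (d : EuclideanSpace ℝ (Fin n)) : ℝ :=
  ⟪d, Matrix.toEuclideanLin B d⟫

/-- `B ⪰ σ I`, i.e. `⟨d, B d⟩ ≥ σ‖d‖²` for all `d`. -/
def MatGE (B : Matrix (Fin n) (Fin n) ℝ) (σ : ℝ) : Prop :=
  ∀ d : EuclideanSpace ℝ (Fin n), σ * ‖d‖ ^ 2 ≤ mquad B d

/-- `Q_j(x,d) = ⟨∇f_j(x), d⟩ + (1/2)⟨d, B_j d⟩ + g_j(x+d) − g_j(x)`. -/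
def Qj (f g : Fin m → EuclideanSpace ℝ (Fin n) → ℝ)
    (B : Fin m → Matrix (Fin n) (Fin n) ℝ) (x d : EuclideanSpace ℝ (Fin n)) (j : Fin m) : ℝ :=
  ⟪gradient (f j) x, d⟫ + (1 / 2) * mquad (B j) d + g j (x + d) - g j x

/-- `Q(x,d) = max_j Q_j(x,d)`. -/
def Qmax (f g : Fin m → EuclideanSpace ℝ (Fin n) → ℝ)
    (B : Fin m → Matrix (Fin n) (Fin n) ℝ) (x d : EuclideanSpace ℝ (Fin n)) : ℝ :=
  ⨆ j, Qj f g B x d j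

/-- `θ(x) = inf_d Q(x,d)`. -/
def theta (f g : Fin m → EuclideanSpace ℝ (Fin n) → ℝ)
    (B : Fin m → Matrix (Fin n) (Fin n) ℝ) (x : EuclideanSpace ℝ (Fin n)) : ℝ :=
  ⨅ d, Qmax f g B x d

/-- One-sided directional derivative. -/
def HasDirDeriv (F : EuclideanSpace ℝ (Fin n) → ℝ) (x d : EuclideanSpace ℝ (Fin n)) (c : ℝ) : Prop :=
  Tendsto (fun t : ℝ => (F (x + t • d) - F x) / t) (𝓝[>] (0 : ℝ)) (𝓝 c)

/-- `x` is a critical point of `F = (F_1,…,F_m)`. -/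
def IsCriticalPt (F : Fin m → EuclideanSpace ℝ (Fin n) → ℝ) (x : EuclideanSpace ℝ (Fin n)) : Prop :=
  ¬ ∃ d : EuclideanSpace ℝ (Fin n), ∀ j, ∃ c : ℝ, HasDirDeriv (F j) x d c ∧ c < 0

/-- `ξ` is a subgradient of `g` at `y`. -/
def IsSubgradAt (g : EuclideanSpace ℝ (Fin n) → ℝ) (y ξ : EuclideanSpace ℝ (Fin n)) : Prop :=
  ∀ z, g y + ⟪ξ, z - y⟫ ≤ g z

/-- Hessian of `f` as the derivative of the gradient. -/
def hess (f : EuclideanSpace ℝ (Fin n) → ℝ) (z : EuclideanSpace ℝ (Fin n)) :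
    EuclideanSpace ℝ (Fin n) →L[ℝ] EuclideanSpace ℝ (Fin n) :=
  fderiv ℝ (fun y => gradient f y) z

section LineSearch

variable {E : Type*} [NormedAddCommGroup E] [NormedSpace ℝ E]

theorem _root_.HasLineDerivAt.eventually_le_add_mul {f : E → ℝ} {x d : E} {a c : ℝ}
    (hf : HasLineDerivAt ℝ f a x d) (hac : a < c) :
    ∀ᶠ α in 𝓝[>] (0 : ℝ), f (x + α • d) ≤ f x + α * c := by
  filter_upwards [hf.tendsto_slope_zero_right.eventually_lt_const hac, self_mem_nhdsWithin]
    with α hslope (hα : 0 < α)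
  rw [smul_eq_mul, inv_mul_lt_iff₀ hα] at hslope
  linarith

theorem _root_.ConvexOn.le_add_mul_sub {g : E → ℝ} (hg : ConvexOn ℝ Set.univ g) (x d : E)
    {α : ℝ} (h0 : 0 ≤ α) (h1 : α ≤ 1) :
    g (x + α • d) ≤ g x + α * (g (x + d) - g x) := by
  have h := hg.2 (Set.mem_univ x) (Set.mem_univ (x + d)) (sub_nonneg.2 h1) h0 (sub_add_cancel 1 α)
  rw [show (1 - α) • x + α • (x + d) = x + α • d by module, smul_eq_mul, smul_eq_mul] at h
  linarith

/-- The one-sided directional derivative of `f + g` along `d` is at most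
`f'(x; d) + g (x + d) - g x`, so any strictly larger slope is eventually an upper bound. -/
theorem _root_.HasLineDerivAt.eventually_add_le_of_convexOn {f g : E → ℝ} {x d : E} {a c : ℝ}
    (hf : HasLineDerivAt ℝ f a x d) (hg : ConvexOn ℝ Set.univ g)
    (hc : a + (g (x + d) - g x) < c) :
    ∀ᶠ α in 𝓝[>] (0 : ℝ), f (x + α • d) + g (x + α • d) ≤ f x + g x + α * c := by
  filter_upwards [hf.eventually_le_add_mul (lt_sub_iff_add_lt.2 hc), Ioo_mem_nhdsGT one_pos]
    with α hf_le ⟨hα0, hα1⟩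
  have hg_le := hg.le_add_mul_sub x d hα0.le hα1.le
  linarith

end LineSearch

theorem mquad_smul (B : Matrix (Fin n) (Fin n) ℝ) (c : ℝ) (d : EuclideanSpace ℝ (Fin n)) :
    mquad B (c • d) = c ^ 2 * mquad B d := by
  simp only [mquad, map_smul, real_inner_smul_left, real_inner_smul_right]
  ring

section Subproblem

variable {f g : Fin m → EuclideanSpace ℝ (Fin n) → ℝ} {B : Fin m → Matrix (Fin n) (Fin n) ℝ}
  {σ : ℝ} {x d : EuclideanSpace ℝ (Fin n)}

theorem Qj_le_Qmax (j : Fin m) : Qj f g B x d j ≤ Qmax f g B x d :=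
  le_ciSup (Set.finite_range _).bddAbove j

theorem theta_eq_Qmax_of_forall_le (hmin : ∀ d', Qmax f g B x d ≤ Qmax f g B x d') :
    theta f g B x = Qmax f g B x d :=
  le_antisymm (ciInf_le ⟨_, Set.forall_mem_range.2 hmin⟩ d) (le_ciInf hmin)

theorem Qj_half_le (j : Fin m) (hg : ConvexOn ℝ Set.univ (g j)) (hB : MatGE (B j) σ) :
    Qj f g B x ((1 / 2 : ℝ) • d) j ≤ 1 / 2 * Qj f g B x d j - σ / 8 * ‖d‖ ^ 2 := by
  have hg_half := hg.le_add_mul_sub x d (by norm_num : (0 : ℝ) ≤ 1 / 2) (by norm_num)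
  have hBd := hB d
  simp only [Qj, mquad_smul, real_inner_smul_right]
  linarith

theorem Qmax_half_le [Nonempty (Fin m)] (hg : ∀ j, ConvexOn ℝ Set.univ (g j))
    (hB : ∀ j, MatGE (B j) σ) :
    Qmax f g B x ((1 / 2 : ℝ) • d) ≤ 1 / 2 * Qmax f g B x d - σ / 8 * ‖d‖ ^ 2 :=
  ciSup_le fun j => (Qj_half_le j (hg j) (hB j)).trans <| by
    gcongr
    exact Qj_le_Qmax j

theorem Qmax_neg_of_forall_le [Nonempty (Fin m)] (hσ : 0 < σ)
    (hg : ∀ j, ConvexOn ℝ Set.univ (g j)) (hB : ∀ j, MatGE (B j) σ)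
    (hmin : ∀ d', Qmax f g B x d ≤ Qmax f g B x d') (hd : d ≠ 0) :
    Qmax f g B x d < 0 := by
  have hhalf := Qmax_half_le (f := f) (x := x) (d := d) hg hB
  have hpos : 0 < σ * ‖d‖ ^ 2 := mul_pos hσ (pow_pos (norm_pos_iff.2 hd) 2)
  linarith [hmin ((1 / 2 : ℝ) • d)]

theorem eventually_add_le_add_mul_of_Qmax_lt {j : Fin m} {c : ℝ}
    (hf : DifferentiableAt ℝ (f j) x) (hg : ConvexOn ℝ Set.univ (g j))
    (hq : 0 ≤ mquad (B j) d) (hc : Qmax f g B x d < c) :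
    ∀ᶠ α in 𝓝[>] (0 : ℝ), f j (x + α • d) + g j (x + α • d) ≤ f j x + g j x + α * c := by
  refine (hf.hasGradientAt.hasFDerivAt.hasLineDerivAt d).eventually_add_le_of_convexOn hg ?_
  have hQj : Qj f g B x d j ≤ Qmax f g B x d := Qj_le_Qmax j
  rw [InnerProductSpace.toDual_apply_apply]
  simp only [Qj] at hQj
  linarith

end Subproblem

theorem nonmonotone_linesearch_well_defined_general
    (n m : ℕ)
    (f g : Fin m → EuclideanSpace ℝ (Fin n) → ℝ)
    (hfdiff : ∀ j, ContDiff ℝ 1 (f j))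
    (hgconv : ∀ j, ConvexOn ℝ Set.univ (g j))
    (B : Fin m → Matrix (Fin n) (Fin n) ℝ)
    (σ : ℝ) (hσ : 0 < σ)
    (hB : ∀ j, MatGE (B j) σ)
    (τ : ℝ) (hτ : τ ∈ Set.Ioo (0 : ℝ) 1)
    (x d0 : EuclideanSpace ℝ (Fin n))
    (hd0min : ∀ d, Qmax f g B x d0 ≤ Qmax f g B x d)
    (hd0ne : d0 ≠ 0)
    (C : Fin m → ℝ) (hC : ∀ j, f j x + g j x ≤ C j) :
    ∃ abar : ℝ, 0 < abar ∧ ∀ α ∈ Set.Ioc (0 : ℝ) abar, ∀ j,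
      f j (x + α • d0) + g j (x + α • d0) ≤ C j + τ * α * theta f g B x := by
  rw [theta_eq_Qmax_of_forall_le hd0min]
  have hdescent : ∀ j, ∀ᶠ α in 𝓝[>] (0 : ℝ),
      f j (x + α • d0) + g j (x + α • d0) ≤ C j + τ * α * Qmax f g B x d0 := by
    intro j
    have : Nonempty (Fin m) := ⟨j⟩
    have hneg := Qmax_neg_of_forall_le hσ hgconv hB hd0min hd0ne
    have hlt : Qmax f g B x d0 < τ * Qmax f g B x d0 := by
      linarith [mul_pos (sub_pos.2 hτ.2) (neg_pos.2 hneg)]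
    have hq : 0 ≤ mquad (B j) d0 := (mul_nonneg hσ.le (sq_nonneg _)).trans (hB j d0)
    filter_upwards [eventually_add_le_add_mul_of_Qmax_lt
      ((hfdiff j).differentiable one_ne_zero x) (hgconv j) hq hlt] with α hα
    linarith [hC j]
  obtain ⟨abar, habar, hsub⟩ := mem_nhdsGT_iff_exists_Ioc_subset.1 (eventually_all.2 hdescent)
  exact ⟨abar, habar, fun α hα => hsub hα⟩

/-- Nonmonotone line search is well defined: if `x` is not critical
(equivalently `d(x) ≠ 0`), then there is `ᾱ > 0` such that for all `α ∈ (0, ᾱ]` and all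
`j`, `F_j(x + α d) ≤ C_j + τ α θ(x)`. -/
theorem nonmonotone_linesearch_well_defined
    (n m : ℕ) (hn : 1 ≤ n) (hm : 1 ≤ m)
    (f g : Fin m → EuclideanSpace ℝ (Fin n) → ℝ)
    (hfconv : ∀ j, ConvexOn ℝ Set.univ (f j))
    (hfdiff : ∀ j, ContDiff ℝ 1 (f j))
    (hgconv : ∀ j, ConvexOn ℝ Set.univ (g j))
    (hgcont : ∀ j, Continuous (g j))
    (B : Fin m → Matrix (Fin n) (Fin n) ℝ)
    (hBsymm : ∀ j, (B j).IsSymm)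
    (σ : ℝ) (hσ : 0 < σ)
    (hB : ∀ j, MatGE (B j) σ)
    (τ : ℝ) (hτ : τ ∈ Set.Ioo (0 : ℝ) 1)
    (x d0 : EuclideanSpace ℝ (Fin n))
    (hd0min : ∀ d, Qmax f g B x d0 ≤ Qmax f g B x d)
    (hd0ne : d0 ≠ 0)
    (C : Fin m → ℝ) (hC : ∀ j, f j x + g j x ≤ C j) :
    ∃ abar : ℝ, 0 < abar ∧ ∀ α ∈ Set.Ioc (0 : ℝ) abar, ∀ j,
      f j (x + α • d0) + g j (x + α • d0) ≤ C j + τ * α * theta f g B x :=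
  nonmonotone_linesearch_well_defined_general n m f g hfdiff hgconv B σ hσ hB τ hτ x d0 hd0min hd0ne
    C hC

end NPQN
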